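/- Let 𝔟 be a finite-dimensional complex Lie algebra and 0 → E₁ → E₂ → E₃ → 0 a short exact sequence of finite-dimensional 𝔟-modules on which a Cartan-type abelian subalgebra 𝔱 ⊆ 𝔟 acts semisimply. If E₁ has no 𝔱-weight equal to 0 and no 𝔱-weight equal to a weight of the nilpotent radical 𝔟⁺ = [𝔟,𝔟] acting on 𝔟 (i.e., no weight of E₁ lies in Δ_𝔟⁺ ∪ {0}), then the induced map on invariants E₂^𝔟 → E₃^𝔟 is an isomorphism. -/

import Mathlib

/-!
As a `𝔱`-module, `E₂` is the sum of its weight spaces, and weight spaces are always independent;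
hence the surjection `g` maps each weight space of `E₂` onto the weight space of `E₃` with the
same weight. An invariant `w ∈ E₃` has weight `0`, so it lifts to a weight-`0` vector `v ∈ E₂`.
For a weight vector `x ∈ 𝔟⁺` of weight `α ∈ Δ`, the vector `⁅x, v⁆` has weight `α` and is killed
by `g`, so it comes from an `α`-weight vector of `E₁` and vanishes. Since `𝔟 = 𝔱 + 𝔟⁺`, `v` is
invariant. Injectivity is the same argument in weight `0`.
-/

open Function

namespace LieModule

section map_comap

variable {R L M M₂ : Type*} [CommRing R] [LieRing L] [LieAlgebra R L]
  [AddCommGroup M] [Module R M] [LieRingModule L M] [LieModule R L M]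
  [AddCommGroup M₂] [Module R M₂] [LieRingModule L M₂] [LieModule R L M₂]
  {χ : L → R} (f : M →ₗ⁅R,L⁆ M₂)

lemma map_weightSpace_le : (weightSpace M χ).map f ≤ weightSpace M₂ χ := by
  rw [LieSubmodule.map_le_iff_le_comap]
  intro m hm
  rw [LieSubmodule.mem_comap, mem_weightSpace]
  intro x
  rw [← f.map_lie, (mem_weightSpace χ m).mp hm x, map_smul]

lemma comap_weightSpace_eq_of_injective (hf : Injective f) :
    (weightSpace M₂ χ).comap f = weightSpace M χ := by
  refine le_antisymm (fun m hm ↦ ?_) (LieSubmodule.map_le_iff_le_comap.mp (map_weightSpace_le f))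
  rw [LieSubmodule.mem_comap, mem_weightSpace] at hm
  rw [mem_weightSpace]
  intro x
  apply hf
  rw [f.map_lie, hm x, map_smul]

variable (R L M) in
lemma iSupIndep_weightSpace [LieRing.IsNilpotent L] [IsDomain R] [Module.IsTorsionFree R M] :
    iSupIndep fun χ : L → R ↦ weightSpace M χ :=
  (iSupIndep_genWeightSpace R L M).mono fun χ : L → R ↦ weightSpace_le_genWeightSpace M χ

lemma map_weightSpace_eq_of_surjective [LieRing.IsNilpotent L] [IsDomain R]
    [Module.IsTorsionFree R M₂] (hf : Surjective f) (hM : ⨆ ψ : L → R, weightSpace M ψ = ⊤) :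
    (weightSpace M χ).map f = weightSpace M₂ χ := by
  have hmap : ⨆ ψ : L → R, (weightSpace M ψ).map f = ⊤ := by
    rw [← LieSubmodule.map_iSup, hM, LieModuleHom.map_top, (LieModuleHom.range_eq_top f).mpr hf]
  exact congr_fun (((iSupIndep_weightSpace R L M₂).le_iff_eq_of_iSup_eq_top hmap).mp
    fun _ ↦ map_weightSpace_le f) χ

end map_comap

variable {R L M : Type*} [CommRing R] [LieRing L] [LieAlgebra R L]
  [AddCommGroup M] [Module R M] [LieRingModule L M] [LieModule R L M]

lemma iSup_weightSpace_eq_top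
    (h : Submodule.span R {v : M | ∃ χ : L → R, ∀ x : L, ⁅x, v⁆ = χ x • v} = ⊤) :
    ⨆ χ : L → R, weightSpace M χ = ⊤ := by
  rw [← LieSubmodule.toSubmodule_eq_top, LieSubmodule.iSup_toSubmodule, eq_top_iff, ← h,
    Submodule.span_le]
  rintro v ⟨χ, hv⟩
  exact Submodule.mem_iSup_of_mem χ ((mem_weightSpace χ v).mpr hv)

lemma lie_mem_weightSpace_of_mem_weightSpace {H : LieSubalgebra R L} {χ₁ χ₂ : H → R} {x : L}
    {m : M} (hx : x ∈ weightSpace L χ₁) (hm : m ∈ weightSpace M χ₂) :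
    ⁅x, m⁆ ∈ weightSpace M (χ₁ + χ₂) := by
  rw [mem_weightSpace] at hx hm ⊢
  intro h
  change ⁅(h : L), ⁅x, m⁆⁆ = _
  rw [leibniz_lie, ← LieSubalgebra.coe_bracket_of_module, hx h, smul_lie,
    ← LieSubalgebra.coe_bracket_of_module, hm h, lie_smul, Pi.add_apply, add_smul]

lemma lie_eq_zero_of_codisjoint {P Q : Submodule R L} (hPQ : Codisjoint P Q) {m : M}
    (hP : ∀ x ∈ P, ⁅x, m⁆ = 0) (hQ : ∀ x ∈ Q, ⁅x, m⁆ = 0) (x : L) : ⁅x, m⁆ = 0 := by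
  let ann : Submodule R L := LinearMap.ker ((toEnd R L M : L →ₗ[R] Module.End R M).flip m)
  have hx : x ∈ P ⊔ Q := hPQ.eq_top ▸ Submodule.mem_top
  exact sup_le (show P ≤ ann from hP) (show Q ≤ ann from hQ) hx

lemma lie_eq_zero_of_mem_span {S : Set L} {m : M} (hS : ∀ y ∈ S, ⁅y, m⁆ = 0) {x : L}
    (hx : x ∈ Submodule.span R S) : ⁅x, m⁆ = 0 := by
  let ann : Submodule R L := LinearMap.ker ((toEnd R L M : L →ₗ[R] Module.End R M).flip m)
  exact Submodule.span_le.mpr (show S ⊆ ann from hS) hx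

end LieModule

open LieModule

theorem invariants_iso_of_no_low_weights_general
    {𝔟 : Type*} [LieRing 𝔟] [LieAlgebra ℂ 𝔟]
    {E₁ E₂ E₃ : Type*}
    [AddCommGroup E₁] [Module ℂ E₁] [LieRingModule 𝔟 E₁] [LieModule ℂ 𝔟 E₁]
    [AddCommGroup E₂] [Module ℂ E₂] [LieRingModule 𝔟 E₂] [LieModule ℂ 𝔟 E₂]
    [AddCommGroup E₃] [Module ℂ E₃] [LieRingModule 𝔟 E₃] [LieModule ℂ 𝔟 E₃]
    (f : E₁ →ₗ⁅ℂ,𝔟⁆ E₂) (g : E₂ →ₗ⁅ℂ,𝔟⁆ E₃)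
    (hf : Function.Injective f) (hg : Function.Surjective g)
    (hexact : ∀ v : E₂, g v = 0 ↔ ∃ u : E₁, f u = v)
    -- the abelian subalgebra 𝔱, complementary to 𝔟⁺ = [𝔟,𝔟]
    (𝔱 : LieSubalgebra ℂ 𝔟) [IsLieAbelian 𝔱]
    (hcompl : IsCompl 𝔱.toSubmodule (LieAlgebra.derivedSeries ℂ 𝔟 1).toSubmodule)
    -- the 𝔱-weights of 𝔟⁺, a set Δ of weights not containing 0
    (Δ : Set (𝔱 → ℂ))
    (hΔ : (LieAlgebra.derivedSeries ℂ 𝔟 1).toSubmodule ≤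
      Submodule.span ℂ {x : 𝔟 | ∃ χ ∈ Δ, ∀ h : 𝔱, ⁅(h : 𝔟), x⁆ = χ h • x})
    -- 𝔱 acts semisimply on the modules considered
    (hss₂ : Submodule.span ℂ {v : E₂ | ∃ χ : 𝔱 → ℂ, ∀ h : 𝔱, ⁅(h : 𝔟), v⁆ = χ h • v} = ⊤)
    -- no 𝔱-weight of E₁ lies in Δ ∪ {0}
    (hwt : ∀ χ : 𝔱 → ℂ, (∃ v : E₁, v ≠ 0 ∧ ∀ h : 𝔱, ⁅(h : 𝔟), v⁆ = χ h • v) →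
      χ ∉ Δ ∧ χ ≠ 0) :
    Set.BijOn g {v : E₂ | ∀ x : 𝔟, ⁅x, v⁆ = 0} {v : E₃ | ∀ x : 𝔟, ⁅x, v⁆ = 0} := by
  have ker_g : ∀ χ : 𝔱 → ℂ, χ ∈ Δ ∨ χ = 0 → ∀ v ∈ weightSpace E₂ χ, g v = 0 → v = 0 := by
    intro χ hχ v hv hgv
    obtain ⟨u, rfl⟩ := (hexact v).mp hgv
    have hu : u ∈ weightSpace E₁ χ :=
      comap_weightSpace_eq_of_injective (f := f.restrictLie 𝔱) hf ▸ hv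
    by_contra hfu
    have := hwt χ ⟨u, fun h ↦ hfu (by rw [h, map_zero]), (mem_weightSpace χ u).mp hu⟩
    tauto
  refine ⟨fun v hv x ↦ by rw [← g.map_lie, hv x, map_zero], ?_, ?_⟩
  · intro a ha b hb hab
    have hab₀ : a - b ∈ weightSpace E₂ (0 : 𝔱 → ℂ) := by simp [mem_weightSpace, ha _, hb _]
    exact sub_eq_zero.mp (ker_g 0 (.inr rfl) _ hab₀ (by rw [map_sub, hab, sub_self]))
  · intro w hw
    have hw₀ : w ∈ weightSpace E₃ (0 : 𝔱 → ℂ) := by simp [mem_weightSpace, hw _]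
    rw [← map_weightSpace_eq_of_surjective (g.restrictLie 𝔱) hg
      (iSup_weightSpace_eq_top hss₂)] at hw₀
    obtain ⟨v, hv, rfl⟩ := hw₀
    refine ⟨v, lie_eq_zero_of_codisjoint hcompl.codisjoint (fun x hx ↦ ?_) (fun x hx ↦ ?_), rfl⟩
    · simpa using (mem_weightSpace _ v).mp hv ⟨x, hx⟩
    · refine lie_eq_zero_of_mem_span ?_ (hΔ hx)
      rintro y ⟨χ, hχ, hy⟩
      have hyv := lie_mem_weightSpace_of_mem_weightSpace ((mem_weightSpace χ y).mpr hy) hv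
      rw [add_zero] at hyv
      exact ker_g χ (.inl hχ) _ hyv (by rw [g.map_lie]; exact hw y)

/-- Let `𝔟 = 𝔱 ⊕ 𝔟⁺` be a finite-dimensional solvable complex Lie algebra
with `𝔱` abelian acting semisimply and `𝔟⁺ = [𝔟,𝔟]` spanned by `𝔱`-weight vectors with
weights in a set `Δ` not containing `0`.  If `0 → E₁ → E₂ → E₃ → 0` is a short exact
sequence of finite-dimensional `𝔟`-modules (with `𝔱` acting semisimply) and no `𝔱`-weight
of `E₁` lies in `Δ ∪ {0}`, then the induced map on `𝔟`-invariants `E₂^𝔟 → E₃^𝔟` is an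
isomorphism (a bijection between the invariant subspaces). -/
theorem invariants_iso_of_no_low_weights
    {𝔟 : Type*} [LieRing 𝔟] [LieAlgebra ℂ 𝔟] [FiniteDimensional ℂ 𝔟]
    [LieAlgebra.IsSolvable 𝔟]
    {E₁ E₂ E₃ : Type*}
    [AddCommGroup E₁] [Module ℂ E₁] [LieRingModule 𝔟 E₁] [LieModule ℂ 𝔟 E₁]
    [FiniteDimensional ℂ E₁]
    [AddCommGroup E₂] [Module ℂ E₂] [LieRingModule 𝔟 E₂] [LieModule ℂ 𝔟 E₂]
    [FiniteDimensional ℂ E₂]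
    [AddCommGroup E₃] [Module ℂ E₃] [LieRingModule 𝔟 E₃] [LieModule ℂ 𝔟 E₃]
    [FiniteDimensional ℂ E₃]
    (f : E₁ →ₗ⁅ℂ,𝔟⁆ E₂) (g : E₂ →ₗ⁅ℂ,𝔟⁆ E₃)
    (hf : Function.Injective f) (hg : Function.Surjective g)
    (hexact : ∀ v : E₂, g v = 0 ↔ ∃ u : E₁, f u = v)
    -- the abelian subalgebra 𝔱, complementary to 𝔟⁺ = [𝔟,𝔟]
    (𝔱 : LieSubalgebra ℂ 𝔟) [IsLieAbelian 𝔱]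
    (hcompl : IsCompl 𝔱.toSubmodule (LieAlgebra.derivedSeries ℂ 𝔟 1).toSubmodule)
    -- the 𝔱-weights of 𝔟⁺, a set Δ of weights not containing 0
    (Δ : Set (𝔱 → ℂ)) (h0 : (0 : 𝔱 → ℂ) ∉ Δ)
    (hΔ : (LieAlgebra.derivedSeries ℂ 𝔟 1).toSubmodule ≤
      Submodule.span ℂ {x : 𝔟 | ∃ χ ∈ Δ, ∀ h : 𝔱, ⁅(h : 𝔟), x⁆ = χ h • x})
    -- 𝔱 acts semisimply on the modules considered
    (hss₁ : Submodule.span ℂ {v : E₁ | ∃ χ : 𝔱 → ℂ, ∀ h : 𝔱, ⁅(h : 𝔟), v⁆ = χ h • v} = ⊤)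
    (hss₂ : Submodule.span ℂ {v : E₂ | ∃ χ : 𝔱 → ℂ, ∀ h : 𝔱, ⁅(h : 𝔟), v⁆ = χ h • v} = ⊤)
    (hss₃ : Submodule.span ℂ {v : E₃ | ∃ χ : 𝔱 → ℂ, ∀ h : 𝔱, ⁅(h : 𝔟), v⁆ = χ h • v} = ⊤)
    -- no 𝔱-weight of E₁ lies in Δ ∪ {0}
    (hwt : ∀ χ : 𝔱 → ℂ, (∃ v : E₁, v ≠ 0 ∧ ∀ h : 𝔱, ⁅(h : 𝔟), v⁆ = χ h • v) →
      χ ∉ Δ ∧ χ ≠ 0) :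
    Set.BijOn g {v : E₂ | ∀ x : 𝔟, ⁅x, v⁆ = 0} {v : E₃ | ∀ x : 𝔟, ⁅x, v⁆ = 0} :=
  invariants_iso_of_no_low_weights_general f g hf hg hexact 𝔱 hcompl Δ hΔ hss₂ hwt
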